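/- arXiv:1510.07324 — 4 statements merged into one kernel-verified Lean document; each statement's English description precedes it below -/
import Mathlib

section
/- Let (I, d, l, A, (R_ι)) be finite gauged poly-log-homogeneous data over dimension D, with associated ζ-function ζ and critical set I₀. Then there exists ε > 0 such that for every z ∈ ℂ with 0 < |z| < ε one has D + d_ι + z + 1 ≠ 0 for all ι ∈ I, the power series below converges absolutely, and ζ(z) = Σ_{ι∈I₀} Σ_{n=0}^{l_ι} (−1)^{l_ι+1} l_ι! · R_ι^{(n)}(0)/n! · z^{n−l_ι−1} + Σ_{n=0}^{∞} c_n z^n, where c_n = A^{(n)}(0)/n! + Σ_{ι∈I∖I₀} Σ_{j=0}^{n} (−1)^{l_ι+j+1} · ((l_ι+j)!/j!) · (D + d_ι + 1)^{−(l_ι+j+1)} · R_ι^{(n−j)}(0)/(n−j)! + Σ_{ι∈I₀} (−1)^{l_ι+1} l_ι! · R_ι^{(n+l_ι+1)}(0)/(n+l_ι+1)!. -/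
open scoped Classical

/-- The ζ-function associated to finite gauged poly-log-homogeneous data
`(I, d, l, A, (R_ι))` over dimension `D`:
`ζ(z) = A(z) + Σ_ι (−1)^{l_ι+1} l_ι! (D + d_ι + z + 1)^{−(l_ι+1)} R_ι(z)`. -/
noncomputable def zetaFn {I : Type*} [Fintype I] (D : ℕ) (d : I → ℂ) (l : I → ℕ)
    (A : ℂ → ℂ) (R : I → ℂ → ℂ) (z : ℂ) : ℂ :=
  A z + ∑ i, (-1 : ℂ) ^ (l i + 1) * (Nat.factorial (l i) : ℂ) *
    ((D : ℂ) + d i + z + 1) ^ (-(l i + 1 : ℤ)) * R i z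

/-- The critical index set `I₀ = {ι : d_ι = −D−1}`. -/
noncomputable def critSet {I : Type*} [Fintype I] (D : ℕ) (d : I → ℂ) : Finset I :=
  Finset.univ.filter fun i => d i = -(D : ℂ) - 1

/-- The coefficient `c_n` of `z^n` in the regular part of the Laurent expansion of the
ζ-function of finite gauged poly-log-homogeneous data at `z = 0`. -/
noncomputable def laurentCoeff {I : Type*} [Fintype I] (D : ℕ) (d : I → ℂ) (l : I → ℕ)
    (A : ℂ → ℂ) (R : I → ℂ → ℂ) (n : ℕ) : ℂ :=
  iteratedDeriv n A 0 / (Nat.factorial n : ℂ) +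
    (∑ i ∈ Finset.univ \ critSet D d, ∑ j ∈ Finset.range (n + 1),
      (-1 : ℂ) ^ (l i + j + 1) * ((Nat.factorial (l i + j) : ℂ) / (Nat.factorial j : ℂ)) *
        ((D : ℂ) + d i + 1) ^ (-(l i + j + 1 : ℤ)) *
        (iteratedDeriv (n - j) (R i) 0 / (Nat.factorial (n - j) : ℂ))) +
    ∑ i ∈ critSet D d, (-1 : ℂ) ^ (l i + 1) * (Nat.factorial (l i) : ℂ) *
      (iteratedDeriv (n + l i + 1) (R i) 0 / (Nat.factorial (n + l i + 1) : ℂ))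

/-- The principal part `Σ_{ι∈I₀} Σ_{n=0}^{l_ι} (−1)^{l_ι+1} l_ι! R_ι^{(n)}(0)/n! · z^{n−l_ι−1}`
of the Laurent expansion of the ζ-function at `z = 0`. -/
noncomputable def principalPart {I : Type*} [Fintype I] (D : ℕ) (d : I → ℂ) (l : I → ℕ)
    (R : I → ℂ → ℂ) (z : ℂ) : ℂ :=
  ∑ i ∈ critSet D d, ∑ n ∈ Finset.range (l i + 1),
    (-1 : ℂ) ^ (l i + 1) * (Nat.factorial (l i) : ℂ) *
      (iteratedDeriv n (R i) 0 / (Nat.factorial n : ℂ)) * z ^ ((n : ℤ) - l i - 1)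


/-!
Expand `A` and every `R ι` in their Taylor series at `0`. For a non-critical index,
`w = D + d ι + 1 ≠ 0` and `(w + z) ^ (-(l + 1))` is the binomial series
`∑ (-1) ^ j * (j + l).choose l * w ^ (-(l + j + 1)) * z ^ j` for `‖z‖ < ‖w‖`; its Cauchy product
with the Taylor series of `R ι` contributes to every `c n`. For a critical index the factor is
exactly `z ^ (-(l + 1))`: the first `l + 1` Taylor terms of `R ι` make up the principal part and
the remaining ones, shifted by `l + 1`, contribute to `c n`.
-/

open Filter Topology Finset
open scoped Nat

lemma AnalyticAt.eventually_hasSum_taylorSeries {f : ℂ → ℂ} {c : ℂ} (hf : AnalyticAt ℂ f c) :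
    ∀ᶠ z in 𝓝 c, HasSum (fun n => iteratedDeriv n f c / n ! * (z - c) ^ n) (f z) := by
  obtain ⟨r, hr, h⟩ := Metric.eventually_nhds_iff_ball.1 hf.eventually_analyticAt
  filter_upwards [Metric.ball_mem_nhds c hr] with z hz
  refine (Complex.hasSum_taylorSeries_on_ball
    (fun y hy => (h y hy).differentiableAt.differentiableWithinAt) hz).congr_fun fun n => ?_
  rw [smul_eq_mul, smul_eq_mul]
  ring

lemma hasSum_zpow_neg_add {w z : ℂ} (hw : w ≠ 0) (hz : ‖z‖ < ‖w‖) (l : ℕ) :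
    HasSum (fun j : ℕ => (-1) ^ j * ((j + l).choose l : ℂ) * w ^ (-(l + j + 1 : ℤ)) * z ^ j)
      ((w + z) ^ (-(l + 1 : ℤ))) := by
  have hwz : w + z ≠ 0 := fun h => by
    rw [← neg_eq_of_add_eq_zero_right h, norm_neg] at hz
    exact lt_irrefl _ hz
  have hr : ‖-(z / w)‖ < 1 := by
    rwa [norm_neg, norm_div, div_lt_one (norm_pos_iff.2 hw)]
  convert (hasSum_choose_mul_geometric_of_norm_lt_one l hr).mul_left (w ^ (-(l + 1 : ℤ)))
    using 1
  · rfl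
  · funext j
    rw [show -(l + j + 1 : ℤ) = -(l + 1 : ℤ) - j by ring, zpow_sub₀ hw, zpow_natCast,
      neg_pow (z / w), div_pow]
    field_simp
  · rw [show (1 : ℂ) - -(z / w) = (w + z) / w by field_simp; ring]
    simp only [zpow_neg, ← Nat.cast_add_one, zpow_natCast, div_pow]
    field_simp

lemma HasSum.mul_powerSeries {a b : ℕ → ℂ} {z A B : ℂ} (ha : HasSum (fun n => a n * z ^ n) A)
    (hb : HasSum (fun n => b n * z ^ n) B) :
    HasSum (fun n => (∑ j ∈ range (n + 1), a j * b (n - j)) * z ^ n) (A * B) := by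
  have h := hasSum_sum_range_mul_of_summable_norm ha.summable.norm hb.summable.norm
  rw [ha.tsum_eq, hb.tsum_eq] at h
  convert h using 1
  · rfl
  funext n
  rw [sum_mul]
  refine sum_congr rfl fun j hj => ?_
  rw [← Nat.add_sub_cancel' (Nat.lt_succ_iff.1 (mem_range.1 hj))]
  simp only [pow_add, Nat.add_sub_cancel_left]
  ring

lemma HasSum.nat_add_mul_pow {g : ℕ → ℂ} {z S : ℂ} (hz : z ≠ 0) (k : ℕ)
    (hg : HasSum (fun n => g n * z ^ n) S) :
    HasSum (fun n => g (n + k) * z ^ n) ((S - ∑ n ∈ range k, g n * z ^ n) / z ^ k) := by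
  refine (((hasSum_nat_add_iff' k).2 hg).div_const (z ^ k)).congr_fun fun n => ?_
  rw [pow_add]
  field_simp

lemma neg_one_pow_mul_factorial_div_factorial (l j : ℕ) :
    (-1 : ℂ) ^ (l + j + 1) * ((l + j)! / j ! : ℂ) =
      (-1) ^ (l + 1) * l ! * ((-1) ^ j * ((j + l).choose l : ℂ)) := by
  have h : ((l + j)! : ℂ) = (j + l).choose l * l ! * j ! := by
    rw [add_comm l j, mul_right_comm]
    exact_mod_cast (Nat.add_choose_mul_factorial_mul_factorial j l).symm
  have hj : (j ! : ℂ) ≠ 0 := Nat.cast_ne_zero.2 (Nat.factorial_ne_zero j)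
  rw [h, pow_add, pow_add]
  field_simp
  ring

lemma eventually_hasSum_zpow_add_mul {R : ℂ → ℂ} (hR : AnalyticAt ℂ R 0) {w : ℂ} (hw : w ≠ 0)
    (l : ℕ) :
    ∀ᶠ z in 𝓝 0, HasSum (fun n : ℕ => (∑ j ∈ range (n + 1),
        (-1 : ℂ) ^ (l + j + 1) * (((l + j)! : ℂ) / (j ! : ℂ)) *
          w ^ (-(l + j + 1 : ℤ)) * (iteratedDeriv (n - j) R 0 / ((n - j)! : ℂ))) *
        z ^ n)
      ((-1 : ℂ) ^ (l + 1) * (l ! : ℂ) * (w + z) ^ (-(l + 1 : ℤ)) * R z) := by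
  filter_upwards [hR.eventually_hasSum_taylorSeries,
    Metric.ball_mem_nhds (0 : ℂ) (norm_pos_iff.2 hw)] with z hRz hz
  rw [mem_ball_zero_iff] at hz
  simp only [sub_zero] at hRz
  rw [mul_assoc]
  refine (((hasSum_zpow_neg_add hw hz l).mul_powerSeries hRz).mul_left _).congr_fun fun n => ?_
  rw [← mul_assoc, mul_sum]
  congr 1
  refine sum_congr rfl fun j _ => ?_
  rw [neg_one_pow_mul_factorial_div_factorial]
  ring

lemma eventually_hasSum_zpow_mul_sub {R : ℂ → ℂ} (hR : AnalyticAt ℂ R 0) (l : ℕ) :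
    ∀ᶠ z in 𝓝[≠] 0, HasSum (fun n : ℕ => (-1 : ℂ) ^ (l + 1) * (l ! : ℂ) *
        (iteratedDeriv (n + l + 1) R 0 / ((n + l + 1)! : ℂ)) * z ^ n)
      ((-1 : ℂ) ^ (l + 1) * (l ! : ℂ) * z ^ (-(l + 1 : ℤ)) * R z -
        ∑ n ∈ range (l + 1), (-1 : ℂ) ^ (l + 1) * (l ! : ℂ) *
          (iteratedDeriv n R 0 / (n ! : ℂ)) * z ^ ((n : ℤ) - l - 1)) := by
  filter_upwards [nhdsWithin_le_nhds hR.eventually_hasSum_taylorSeries, self_mem_nhdsWithin]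
    with z hRz hz
  simp only [sub_zero] at hRz
  have hzpow : ∀ n : ℕ, z ^ ((n : ℤ) - l - 1) = z ^ n / z ^ (l + 1) := fun n => by
    rw [sub_sub, zpow_sub₀ hz]
    norm_cast
  convert (hRz.nat_add_mul_pow hz (l + 1)).mul_left ((-1 : ℂ) ^ (l + 1) * l !) using 1
  · rfl
  · funext n
    rw [← add_assoc]
    ring
  · rw [zpow_neg, ← Nat.cast_add_one, zpow_natCast, sub_div, sum_div, mul_sub, mul_sum]
    simp_rw [hzpow]
    congr 1
    · ring
    · exact sum_congr rfl fun n _ => by ring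

lemma eventually_add_ne_zero (w : ℂ) : ∀ᶠ z in 𝓝[≠] 0, w + z ≠ 0 := by
  rcases eq_or_ne w 0 with rfl | hw
  · filter_upwards [self_mem_nhdsWithin] with z hz
    simpa using hz
  · exact nhdsWithin_le_nhds ((continuous_const.add continuous_id).continuousAt.eventually_ne
      (by simpa using hw))

lemma mem_critSet_iff {I : Type*} [Fintype I] {D : ℕ} {d : I → ℂ} {i : I} :
    i ∈ critSet D d ↔ (D : ℂ) + d i + 1 = 0 := by
  rw [critSet, mem_filter, and_iff_right (mem_univ i)]
  constructor <;> intro h <;> linear_combination h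

section Laurent

variable {I : Type*} [Fintype I] (D : ℕ) (d : I → ℂ) (l : I → ℕ) {R : I → ℂ → ℂ}

lemma eventually_hasSum_regular_term (hR : ∀ i, AnalyticAt ℂ (R i) 0) {i : I}
    (hi : i ∈ univ \ critSet D d) :
    ∀ᶠ z in 𝓝[≠] 0, HasSum (fun n : ℕ => (∑ j ∈ range (n + 1),
        (-1 : ℂ) ^ (l i + j + 1) * (((l i + j)! : ℂ) / (j ! : ℂ)) *
          ((D : ℂ) + d i + 1) ^ (-(l i + j + 1 : ℤ)) *
          (iteratedDeriv (n - j) (R i) 0 / ((n - j)! : ℂ))) * z ^ n)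
      ((-1 : ℂ) ^ (l i + 1) * ((l i)! : ℂ) *
        ((D : ℂ) + d i + z + 1) ^ (-(l i + 1 : ℤ)) * R i z) := by
  have hw : (D : ℂ) + d i + 1 ≠ 0 := fun h => (mem_sdiff.1 hi).2 (mem_critSet_iff.2 h)
  filter_upwards [nhdsWithin_le_nhds (eventually_hasSum_zpow_add_mul (hR i) hw (l i))] with z hz
  rwa [add_right_comm _ z]

lemma eventually_hasSum_critical_term (hR : ∀ i, AnalyticAt ℂ (R i) 0) {i : I}
    (hi : i ∈ critSet D d) :
    ∀ᶠ z in 𝓝[≠] 0, HasSum (fun n : ℕ => (-1 : ℂ) ^ (l i + 1) * ((l i)! : ℂ) *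
        (iteratedDeriv (n + l i + 1) (R i) 0 / ((n + l i + 1)! : ℂ)) * z ^ n)
      ((-1 : ℂ) ^ (l i + 1) * ((l i)! : ℂ) *
          ((D : ℂ) + d i + z + 1) ^ (-(l i + 1 : ℤ)) * R i z -
        ∑ n ∈ range (l i + 1), (-1 : ℂ) ^ (l i + 1) * ((l i)! : ℂ) *
          (iteratedDeriv n (R i) 0 / (n ! : ℂ)) * z ^ ((n : ℤ) - l i - 1)) := by
  filter_upwards [eventually_hasSum_zpow_mul_sub (hR i) (l i)] with z hz
  rwa [show (D : ℂ) + d i + z + 1 = z by linear_combination mem_critSet_iff.1 hi]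

lemma eventually_hasSum_laurentCoeff {A : ℂ → ℂ} (hA : AnalyticAt ℂ A 0)
    (hR : ∀ i, AnalyticAt ℂ (R i) 0) :
    ∀ᶠ z in 𝓝[≠] 0, HasSum (fun n => laurentCoeff D d l A R n * z ^ n)
      (zetaFn D d l A R z - principalPart D d l R z) := by
  filter_upwards [nhdsWithin_le_nhds hA.eventually_hasSum_taylorSeries,
    (eventually_all_finset _).2 fun i hi => eventually_hasSum_regular_term D d l hR hi,
    (eventually_all_finset _).2 fun i hi => eventually_hasSum_critical_term D d l hR hi]
    with z hAz hreg hcrit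
  simp only [sub_zero] at hAz
  convert (hAz.add (hasSum_sum hreg)).add (hasSum_sum hcrit) using 1
  · funext n
    simp only [laurentCoeff, add_mul, sum_mul]
  · rw [zetaFn, principalPart, ← sum_sdiff (subset_univ (critSet D d)), sum_sub_distrib]
    ring

end Laurent

theorem stmt_4_general {I : Type*} [Fintype I] (D : ℕ) (d : I → ℂ) (l : I → ℕ)
    (A : ℂ → ℂ) (R : I → ℂ → ℂ)
    (hA : AnalyticAt ℂ A 0) (hR : ∀ i, AnalyticAt ℂ (R i) 0) :
    ∃ ε > 0, ∀ z : ℂ, 0 < ‖z‖ → ‖z‖ < ε →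
      (∀ i, (D : ℂ) + d i + z + 1 ≠ 0) ∧
      Summable (fun n : ℕ => ‖laurentCoeff D d l A R n * z ^ n‖) ∧
      zetaFn D d l A R z =
        principalPart D d l R z + ∑' n : ℕ, laurentCoeff D d l A R n * z ^ n := by
  have hne : ∀ᶠ z in 𝓝[≠] 0, ∀ i, (D : ℂ) + d i + z + 1 ≠ 0 :=
    eventually_all.2 fun i => (eventually_add_ne_zero ((D : ℂ) + d i + 1)).mono
      fun z hz => by rwa [add_right_comm _ z]
  obtain ⟨ε, hε, hball⟩ := Metric.eventually_nhds_iff.1 <| eventually_nhdsWithin_iff.1 <|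
    hne.and (eventually_hasSum_laurentCoeff D d l hA hR)
  refine ⟨ε, hε, fun z hz hzε => ?_⟩
  obtain ⟨hz_ne, hsum⟩ := hball (by rwa [dist_zero_right]) (norm_pos_iff.1 hz)
  exact ⟨hz_ne, hsum.summable.norm, by rw [hsum.tsum_eq]; ring⟩

/-- Laurent expansion of the ζ-function of finite gauged poly-log-homogeneous data at 0. -/
theorem stmt_4 {I : Type*} [Fintype I] (D : ℕ) (d : I → ℂ) (l : I → ℕ)
    (hinj : Function.Injective fun i => (d i, l i))
    (A : ℂ → ℂ) (R : I → ℂ → ℂ)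
    (hA : AnalyticAt ℂ A 0) (hR : ∀ i, AnalyticAt ℂ (R i) 0) :
    ∃ ε > 0, ∀ z : ℂ, 0 < ‖z‖ → ‖z‖ < ε →
      (∀ i, (D : ℂ) + d i + z + 1 ≠ 0) ∧
      Summable (fun n : ℕ => ‖laurentCoeff D d l A R n * z ^ n‖) ∧
      zetaFn D d l A R z =
        principalPart D d l R z + ∑' n : ℕ, laurentCoeff D d l A R n * z ^ n :=
  stmt_4_general D d l A R hA hR
end

section
/- Let (I, d, l, A, (R_ι)) and (I, d, l, B, (S_ι)) be two sets of finite gauged poly-log-homogeneous data over dimension D sharing the same index set, degrees and logarithmic orders, with associated ζ-functions ζ₁ and ζ₂ and nonempty critical set I₀. Let j ∈ I₀ be the (by injectivity of ι ↦ (d_ι,l_ι), unique) critical index of maximal logarithmic order l_j. Assume R_ι(0) = S_ι(0) for all ι ∈ I₀ and R_j(0) ≠ 0. Then lim_{z→0} z^{l_j+1} ζ₁(z) = (−1)^{l_j+1} l_j! R_j(0) = lim_{z→0} z^{l_j+1} ζ₂(z), and this common limit is nonzero; in particular ζ₁ and ζ₂ have poles at 0 of the same order l_j + 1 with the same leading Laurent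 coefficient, i.e. the order and value of the initial Laurent coefficient of the ζ-function at zero are independent of the gauge. -/
open scoped Classical Topology

/-!
A non-critical summand of ζ is continuous at `0`, so it is killed by the factor `z^{l_j+1}`;
so is the regular part. For a critical index `i` the summand is `(−1)^{l_i+1} l_i! z^{−(l_i+1)} R_i(z)`,
and `z^{l_j+1}` times it tends to `(−1)^{l_i+1} l_i! 0^{l_j−l_i} R_i(0)`, which vanishes unless
`l_i = l_j`, i.e. (by injectivity of `ι ↦ (d_ι, l_ι)`) unless `i = j`. Hence the limit only sees
`R_j(0)`, which is the same for both gauges.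
-/

open Filter

noncomputable def zetaFnSummand {I : Type*} (D : ℕ) (d : I → ℂ) (l : I → ℕ)
    (R : I → ℂ → ℂ) (i : I) (z : ℂ) : ℂ :=
  (-1 : ℂ) ^ (l i + 1) * (Nat.factorial (l i) : ℂ) *
    ((D : ℂ) + d i + z + 1) ^ (-(l i + 1 : ℤ)) * R i z

theorem tendsto_pow_succ_mul_nhdsNE_zero {𝕜 : Type*} [NormedField 𝕜] {f : 𝕜 → 𝕜}
    (hf : ContinuousAt f 0) (n : ℕ) :
    Tendsto (fun z => z ^ (n + 1) * f z) (𝓝[≠] 0) (𝓝 0) := by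
  have hcont : ContinuousAt (fun z => z ^ (n + 1) * f z) 0 := by fun_prop
  simpa using hcont.tendsto.mono_left nhdsWithin_le_nhds

section Summand

variable {I : Type*} (D : ℕ) (d : I → ℂ) (l : I → ℕ) (R : I → ℂ → ℂ)

theorem zetaFn_eq_add_sum [Fintype I] (A : ℂ → ℂ) (z : ℂ) :
    zetaFn D d l A R z = A z + ∑ i, zetaFnSummand D d l R i z :=
  rfl

theorem continuousAt_zetaFnSummand {i : I} (hR : ContinuousAt (R i) 0)
    (hi : d i ≠ -(D : ℂ) - 1) : ContinuousAt (zetaFnSummand D d l R i) 0 := by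
  have hbase : (D : ℂ) + d i + 0 + 1 ≠ 0 := fun h => hi (by linear_combination h)
  have hzpow : ContinuousAt (fun z : ℂ => ((D : ℂ) + d i + z + 1) ^ (-(l i + 1 : ℤ))) 0 :=
    (continuousAt_const.add continuousAt_id |>.add continuousAt_const).zpow₀ _ (Or.inl hbase)
  exact (continuousAt_const.mul hzpow).mul hR

theorem tendsto_pow_mul_zetaFnSummand_of_critical {i : I} (hR : ContinuousAt (R i) 0)
    (hi : d i = -(D : ℂ) - 1) {m : ℕ} (hm : l i ≤ m) :
    Tendsto (fun z => z ^ (m + 1) * zetaFnSummand D d l R i z) (𝓝[≠] 0)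
      (𝓝 ((-1 : ℂ) ^ (l i + 1) * (Nat.factorial (l i) : ℂ) * 0 ^ (m - l i) * R i 0)) := by
  set c : ℂ := (-1 : ℂ) ^ (l i + 1) * (Nat.factorial (l i) : ℂ)
  have hlaurent : (fun z => c * z ^ (m - l i) * R i z)
      =ᶠ[𝓝[≠] 0] fun z => z ^ (m + 1) * zetaFnSummand D d l R i z := by
    filter_upwards [self_mem_nhdsWithin] with z (hz : z ≠ 0)
    have hbase : (D : ℂ) + d i + z + 1 = z := by rw [hi]; ring
    have hpow : z ^ (m + 1) * z ^ (-(l i + 1 : ℤ)) = z ^ (m - l i) := by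
      rw [show (-(l i + 1 : ℤ)) = -((l i + 1 : ℕ) : ℤ) by push_cast; rfl, zpow_neg,
        zpow_natCast, ← Nat.add_sub_add_right m 1 (l i), pow_sub₀ z hz (by omega)]
    simp only [zetaFnSummand, hbase, ← hpow]
    ring
  have hcont : ContinuousAt (fun z => c * z ^ (m - l i) * R i z) 0 := by fun_prop
  exact (hcont.tendsto.mono_left nhdsWithin_le_nhds).congr' hlaurent

theorem tendsto_pow_mul_zetaFnSummand (hinj : Function.Injective fun i => (d i, l i))
    (hR : ∀ i, ContinuousAt (R i) 0) {j : I} (hj : d j = -(D : ℂ) - 1)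
    (hjmax : ∀ i, d i = -(D : ℂ) - 1 → l i ≤ l j) (i : I) :
    Tendsto (fun z => z ^ (l j + 1) * zetaFnSummand D d l R i z) (𝓝[≠] 0)
      (𝓝 (if i = j then (-1 : ℂ) ^ (l j + 1) * (Nat.factorial (l j) : ℂ) * R j 0 else 0)) := by
  by_cases hi : d i = -(D : ℂ) - 1
  · convert tendsto_pow_mul_zetaFnSummand_of_critical D d l R (hR i) hi (hjmax i hi) using 2
    split_ifs with hij
    · subst hij
      simp
    · have hlt : l i < l j := lt_of_le_of_ne (hjmax i hi) fun h =>
        hij (hinj (by simp only [hi, hj, h]))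
      simp [Nat.sub_ne_zero_of_lt hlt]
  · rw [if_neg (by rintro rfl; exact hi hj)]
    exact tendsto_pow_succ_mul_nhdsNE_zero (continuousAt_zetaFnSummand D d l R (hR i) hi) _

theorem tendsto_pow_mul_zetaFn [Fintype I] (hinj : Function.Injective fun i => (d i, l i))
    {A : ℂ → ℂ} (hA : ContinuousAt A 0) (hR : ∀ i, ContinuousAt (R i) 0)
    {j : I} (hj : d j = -(D : ℂ) - 1) (hjmax : ∀ i, d i = -(D : ℂ) - 1 → l i ≤ l j) :
    Tendsto (fun z => z ^ (l j + 1) * zetaFn D d l A R z) (𝓝[≠] 0)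
      (𝓝 ((-1 : ℂ) ^ (l j + 1) * (Nat.factorial (l j) : ℂ) * R j 0)) := by
  have hsum := tendsto_finsetSum Finset.univ fun i _ =>
    tendsto_pow_mul_zetaFnSummand D d l R hinj hR hj hjmax i
  rw [Finset.sum_ite_eq' Finset.univ j, if_pos (Finset.mem_univ j)] at hsum
  simpa only [zetaFn_eq_add_sum, mul_add, Finset.mul_sum, zero_add] using
    (tendsto_pow_succ_mul_nhdsNE_zero hA (l j)).add hsum

end Summand

/-- Gauge independence of the order and the value of the initial Laurent coefficient:
if `j` is the critical index of maximal logarithmic order, the critical residues of the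
two gauges agree at `0`, and `R_j(0) ≠ 0`, then `z^{l_j+1} ζ₁(z)` and `z^{l_j+1} ζ₂(z)`
both tend to the nonzero value `(−1)^{l_j+1} l_j! R_j(0)` as `z → 0`, `z ≠ 0`. -/
theorem stmt_6 {I : Type*} [Fintype I] (D : ℕ) (d : I → ℂ) (l : I → ℕ)
    (hinj : Function.Injective fun i => (d i, l i))
    (A B : ℂ → ℂ) (R S : I → ℂ → ℂ)
    (hA : AnalyticAt ℂ A 0) (hR : ∀ i, AnalyticAt ℂ (R i) 0)
    (hB : AnalyticAt ℂ B 0) (hS : ∀ i, AnalyticAt ℂ (S i) 0)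
    (j : I) (hj : d j = -(D : ℂ) - 1)
    (hjmax : ∀ i, d i = -(D : ℂ) - 1 → l i ≤ l j)
    (hRS : ∀ i, d i = -(D : ℂ) - 1 → R i 0 = S i 0)
    (hRj : R j 0 ≠ 0) :
    Filter.Tendsto (fun z : ℂ => z ^ (l j + 1) * zetaFn D d l A R z) (𝓝[≠] 0)
        (𝓝 ((-1 : ℂ) ^ (l j + 1) * (Nat.factorial (l j) : ℂ) * R j 0)) ∧
      Filter.Tendsto (fun z : ℂ => z ^ (l j + 1) * zetaFn D d l B S z) (𝓝[≠] 0)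
        (𝓝 ((-1 : ℂ) ^ (l j + 1) * (Nat.factorial (l j) : ℂ) * R j 0)) ∧
      (-1 : ℂ) ^ (l j + 1) * (Nat.factorial (l j) : ℂ) * R j 0 ≠ 0 := by
  refine ⟨tendsto_pow_mul_zetaFn D d l R hinj hA.continuousAt (fun i => (hR i).continuousAt) hj
    hjmax, ?_, by simp [hRj, Nat.factorial_ne_zero]⟩
  rw [hRS j hj]
  exact tendsto_pow_mul_zetaFn D d l S hinj hB.continuousAt (fun i => (hS i).continuousAt) hj hjmax
end

section
/- Let n ≥ 1, let d, z ∈ ℂ and k ∈ ℕ, let a : ℝⁿ∖{0} → ℂ be continuous and homogeneous of degree d, and let T be an invertible linear endomorphism of ℝⁿ. Then ∫_{S^{n−1}} a(Tξ) · ‖Tξ‖^z · (log ‖Tξ‖)^k dσ(ξ) = (−1)^k · |det T|^{−1} · ∫_{S^{n−1}} a(ξ) · ‖T^{−1}ξ‖^{−n−d−z} · (log ‖T^{−1}ξ‖)^k dσ(ξ). -/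
/-!
Let `g` be homogeneous of degree `-n` on `ℝⁿ ∖ {0}`. On the ray through `ξ ∈ S^{n-1}` the annulus
`{1 < ‖L x‖ ≤ 2}` is cut out by `1/m < r ≤ 2/m` with `m = ‖L ξ‖`, so the radial integral
`∫ r^{n-1} r^{-n} dr` over it is `log 2` whatever `m`. In polar coordinates this gives
`∫_{1 < ‖L x‖ ≤ 2} g = log 2 · ∫_{S^{n-1}} g dσ` for every invertible `L`. Applied to `g ∘ T`
with `L = id`, the linear change of variables `y = T x` turns this into
`∫_{S^{n-1}} g ∘ T dσ = |det T|⁻¹ ∫_{S^{n-1}} g dσ`. The theorem is the case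
`g x = a x ‖x‖^z ‖T⁻¹ x‖^{-n-d-z} (log (‖T⁻¹ x‖ / ‖x‖))^k`, which restricts on the sphere to the
right-hand integrand and, composed with `T`, to `(-1)^k` times the left-hand one.
-/

open MeasureTheory Metric Set

def PosHomogeneous {E : Type*} [NormedAddCommGroup E] [NormedSpace ℝ E] (f : E → ℂ) (d : ℂ) :
    Prop :=
  ∀ t : ℝ, 0 < t → ∀ x : E, x ≠ 0 → f (t • x) = (t : ℂ) ^ d * f x

section Homogeneous

variable {E F : Type*} [NormedAddCommGroup E] [NormedAddCommGroup F]

theorem continuousOn_norm_cpow (w : ℂ) : ContinuousOn (fun x : E ↦ (‖x‖ : ℂ) ^ w) {0}ᶜ :=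
  (Complex.continuous_ofReal.comp continuous_norm).continuousOn.cpow_const fun _ hx ↦
    Complex.ofReal_mem_slitPlane.2 (norm_pos_iff.2 hx)

variable [NormedSpace ℝ E] [NormedSpace ℝ F]

theorem PosHomogeneous.mul {f g : E → ℂ} {d e : ℂ} (hf : PosHomogeneous f d)
    (hg : PosHomogeneous g e) : PosHomogeneous (f * g) (d + e) := by
  intro t ht x hx
  rw [Pi.mul_apply, Pi.mul_apply, hf t ht x hx, hg t ht x hx,
    Complex.cpow_add _ _ (Complex.ofReal_ne_zero.2 ht.ne')]
  ring

theorem PosHomogeneous.comp_linearEquiv {f : E → ℂ} {d : ℂ} (hf : PosHomogeneous f d)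
    (L : F ≃ₗ[ℝ] E) : PosHomogeneous (f ∘ L) d := fun t ht x hx ↦ by
  simpa using hf t ht (L x) (L.map_ne_zero_iff.2 hx)

theorem posHomogeneous_norm_cpow (w : ℂ) : PosHomogeneous (fun x : E ↦ (‖x‖ : ℂ) ^ w) w :=
  fun t ht x _ ↦ by
    dsimp only
    rw [norm_smul, Real.norm_of_nonneg ht.le, Complex.ofReal_mul,
      Complex.mul_cpow_ofReal_nonneg ht.le (norm_nonneg x)]

theorem posHomogeneous_comp_norm_div_norm (φ : ℝ → ℂ) (L : E →ₗ[ℝ] F) :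
    PosHomogeneous (fun x ↦ φ (‖L x‖ / ‖x‖)) 0 := fun t ht x _ ↦ by
  dsimp only
  rw [Complex.cpow_zero, one_mul, L.map_smul, norm_smul, norm_smul, mul_div_mul_left _ _
    (norm_ne_zero_iff.2 ht.ne')]

theorem integral_Ioi_pow_smul_indicator_annulus [FiniteDimensional ℝ E] [Nontrivial E]
    {h : E → ℂ} (hh : PosHomogeneous h (-(Module.finrank ℝ E : ℂ))) (L : E ≃ₗ[ℝ] E) {x : E}
    (hx : x ≠ 0) :
    ∫ r in Ioi (0 : ℝ), r ^ (Module.finrank ℝ E - 1) •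
      {y | ‖L y‖ ∈ Ioc (1 : ℝ) 2}.indicator h (r • x) = Real.log 2 • h x := by
  set n := Module.finrank ℝ E
  have hn : 0 < n := Module.finrank_pos
  set m := ‖L x‖
  have hm : 0 < m := norm_pos_iff.2 (L.map_ne_zero_iff.2 hx)
  have hray : ∀ r ∈ Ioi (0 : ℝ), r ^ (n - 1) • {y | ‖L y‖ ∈ Ioc (1 : ℝ) 2}.indicator h (r • x)
      = (Ioc (1 / m) (2 / m)).indicator (fun r ↦ r⁻¹ • h x) r := by
    intro r (hr : 0 < r)
    have hmem : r • x ∈ {y | ‖L y‖ ∈ Ioc (1 : ℝ) 2} ↔ r ∈ Ioc (1 / m) (2 / m) := by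
      simp only [mem_ofPred_eq, mem_Ioc, L.map_smul, norm_smul, Real.norm_of_nonneg hr.le,
        div_lt_iff₀ hm, le_div_iff₀ hm, m]
    by_cases hrm : r ∈ Ioc (1 / m) (2 / m)
    · have hpow : (r : ℂ) ^ n = r ^ (n - 1) * r := by rw [← pow_succ, Nat.sub_add_cancel hn]
      have hr0 : (r : ℂ) ≠ 0 := Complex.ofReal_ne_zero.2 hr.ne'
      rw [indicator_of_mem (hmem.2 hrm), indicator_of_mem hrm, hh r hr x hx, Complex.cpow_neg,
        Complex.cpow_natCast, hpow, Complex.real_smul, Complex.real_smul]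
      push_cast
      field_simp
    · rw [indicator_of_notMem (mt hmem.1 hrm), indicator_of_notMem hrm, smul_zero]
  have hle : 1 / m ≤ 2 / m := by gcongr; norm_num
  have hpos : Ioc (1 / m) (2 / m) ⊆ Ioi 0 := fun r hr ↦ (one_div_pos.2 hm).trans hr.1
  rw [setIntegral_congr_fun measurableSet_Ioi hray, integral_indicator measurableSet_Ioc,
    Measure.restrict_restrict measurableSet_Ioc, inter_eq_left.2 hpos, integral_smul_const,
    ← intervalIntegral.integral_of_le hle, integral_inv_of_pos (by positivity) (by positivity)]
  congr 2
  field_simp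

theorem continuousOn_log_norm_div_norm [FiniteDimensional ℝ E] (L : E ≃ₗ[ℝ] E) :
    ContinuousOn (fun x ↦ Real.log (‖L x‖ / ‖x‖)) {0}ᶜ :=
  ((continuous_norm.comp L.continuous_of_finiteDimensional).continuousOn.div
    continuous_norm.continuousOn fun _ hx ↦ norm_ne_zero_iff.2 hx).log fun _ hx ↦
      div_ne_zero (norm_ne_zero_iff.2 (L.map_ne_zero_iff.2 hx)) (norm_ne_zero_iff.2 hx)

end Homogeneous

section Polar

variable {E F : Type*} [NormedAddCommGroup E] [NormedSpace ℝ E] [FiniteDimensional ℝ E]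
  [MeasurableSpace E] [BorelSpace E] [NormedAddCommGroup F] (μ : Measure E) [μ.IsAddHaarMeasure]

theorem integrable_indicator_annulus {h : E → F} (hc : ContinuousOn h {0}ᶜ) (L : E ≃ₗ[ℝ] E) :
    Integrable ({x | ‖L x‖ ∈ Ioc (1 : ℝ) 2}.indicator h) μ := by
  set K := L ⁻¹' (closedBall 0 2 \ ball 0 1)
  have hK : IsCompact K := L.toContinuousLinearEquiv.toHomeomorph.isCompact_preimage.2
    ((isCompact_closedBall 0 2).diff isOpen_ball)
  have hK0 : K ⊆ {0}ᶜ := by rintro x hx (rfl : x = 0); norm_num [K] at hx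
  have hsub : {x | ‖L x‖ ∈ Ioc (1 : ℝ) 2} ⊆ K := fun x hx ↦ by
    simp only [mem_ofPred_eq, mem_Ioc] at hx
    simp [K, hx.2, hx.1.le]
  refine IntegrableOn.integrable_indicator ?_ ?_
  · exact ((hc.mono hK0).integrableOn_compact hK).mono_set hsub
  · exact measurableSet_Ioc.preimage
      (continuous_norm.comp L.continuous_of_finiteDimensional).measurable

variable [NormedSpace ℝ F]

theorem integral_volumeIoiPow (m : ℕ) (h : ℝ → F) :
    ∫ r, h r ∂Measure.volumeIoiPow m = ∫ r in Ioi (0 : ℝ), r ^ m • h r := by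
  rw [Measure.volumeIoiPow]
  simp only [ENNReal.ofReal]
  rw [integral_withDensity_eq_integral_smul
      ((measurable_subtype_coe.pow_const _).real_toNNReal),
    integral_subtype_comap measurableSet_Ioi fun r : ℝ ↦ Real.toNNReal (r ^ m) • h r]
  refine setIntegral_congr_fun measurableSet_Ioi fun r hr ↦ ?_
  rw [NNReal.smul_def, Real.coe_toNNReal _ (pow_nonneg hr.out.le _)]

theorem integral_eq_integral_toSphere_integral_Ioi [Nontrivial E] {g : E → F}
    (hg : Integrable g μ) :
    ∫ x, g x ∂μ = ∫ ξ : sphere (0 : E) 1,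
      (∫ r in Ioi (0 : ℝ), r ^ (Module.finrank ℝ E - 1) • g (r • (ξ : E))) ∂μ.toSphere := by
  have hmp := μ.measurePreserving_homeomorphUnitSphereProd
  have hpolar : ∀ x : ({0}ᶜ : Set E),
      (homeomorphUnitSphereProd E x).2.1 • ((homeomorphUnitSphereProd E x).1 : E) = x := fun x ↦ by
    simp [smul_inv_smul₀ (norm_ne_zero_iff.2 x.2)]
  have hg' : Integrable (fun x : ({0}ᶜ : Set E) ↦ g x) (μ.comap Subtype.val) :=
    (integrableOn_iff_comap_subtypeVal (measurableSet_singleton _).compl).1 hg.integrableOn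
  have hprod : Integrable (fun p : sphere (0 : E) 1 × Ioi (0 : ℝ) ↦ g (p.2.1 • (p.1 : E)))
      (μ.toSphere.prod (Measure.volumeIoiPow (Module.finrank ℝ E - 1))) := by
    rw [← hmp.integrable_comp_emb (Homeomorph.measurableEmbedding _)]
    simpa only [Function.comp_def, hpolar] using hg'
  calc ∫ x, g x ∂μ = ∫ x : ({0}ᶜ : Set E), g x ∂(μ.comap Subtype.val) := by
        rw [integral_subtype_comap (measurableSet_singleton _).compl, restrict_compl_singleton]
    _ = ∫ p : sphere (0 : E) 1 × Ioi (0 : ℝ), g (p.2.1 • (p.1 : E))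
          ∂(μ.toSphere.prod (Measure.volumeIoiPow (Module.finrank ℝ E - 1))) := by
        rw [← hmp.integral_comp (Homeomorph.measurableEmbedding _)]
        simp only [hpolar]
    _ = _ := by
        rw [integral_prod _ hprod]
        exact integral_congr_ae <| .of_forall fun ξ ↦ integral_volumeIoiPow _ fun r ↦ g (r • ξ.1)

theorem integral_comp_linearEquiv (T : E ≃ₗ[ℝ] E) (g : E → F) :
    ∫ x, g (T x) ∂μ = |LinearMap.det (T : E →ₗ[ℝ] E)|⁻¹ • ∫ x, g x ∂μ := by
  have hmap : μ.map T = ENNReal.ofReal |(LinearMap.det (T : E →ₗ[ℝ] E))⁻¹| • μ := by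
    simpa using μ.map_linearMap_addHaar_eq_smul_addHaar (isUnit_iff_ne_zero.1 T.isUnit_det')
  have hT : MeasurableEmbedding T := T.toContinuousLinearEquiv.toHomeomorph.measurableEmbedding
  rw [← hT.integral_map, hmap, integral_smul_measure, ENNReal.toReal_ofReal (abs_nonneg _),
    abs_inv]

theorem integral_indicator_annulus [Nontrivial E] {h : E → ℂ} (hc : ContinuousOn h {0}ᶜ)
    (hh : PosHomogeneous h (-(Module.finrank ℝ E : ℂ))) (L : E ≃ₗ[ℝ] E) :
    ∫ x, {x | ‖L x‖ ∈ Ioc (1 : ℝ) 2}.indicator h x ∂μ = Real.log 2 • ∫ ξ, h ξ ∂μ.toSphere := by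
  rw [integral_eq_integral_toSphere_integral_Ioi μ (integrable_indicator_annulus μ hc L),
    ← integral_smul]
  exact integral_congr_ae <| .of_forall fun ξ ↦
    integral_Ioi_pow_smul_indicator_annulus hh L (ne_of_mem_sphere ξ.2 one_ne_zero)

theorem integral_toSphere_comp_linearEquiv {g : E → ℂ} (hc : ContinuousOn g {0}ᶜ)
    (hg : PosHomogeneous g (-(Module.finrank ℝ E : ℂ))) (T : E ≃ₗ[ℝ] E) :
    ∫ ξ, g (T ξ) ∂μ.toSphere = |LinearMap.det (T : E →ₗ[ℝ] E)|⁻¹ • ∫ ξ, g ξ ∂μ.toSphere := by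
  rcases subsingleton_or_nontrivial E with hE | hE
  · simp [μ.toSphere_eq_zero_iff.2 hE]
  have hgT : ContinuousOn (g ∘ T) {0}ᶜ :=
    hc.comp T.continuous_of_finiteDimensional.continuousOn fun _ hx ↦ T.map_ne_zero_iff.2 hx
  refine smul_right_injective ℂ (Real.log_pos one_lt_two).ne' ?_
  calc Real.log 2 • ∫ ξ, g (T ξ) ∂μ.toSphere
      = ∫ x, {x | ‖LinearEquiv.refl ℝ E x‖ ∈ Ioc (1 : ℝ) 2}.indicator (g ∘ T) x ∂μ :=
        (integral_indicator_annulus μ hgT (hg.comp_linearEquiv T) (.refl ℝ E)).symm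
    _ = ∫ x, {y | ‖T.symm y‖ ∈ Ioc (1 : ℝ) 2}.indicator g (T x) ∂μ := by
        simp [indicator_apply]
    _ = |LinearMap.det (T : E →ₗ[ℝ] E)|⁻¹ •
          ∫ y, {y | ‖T.symm y‖ ∈ Ioc (1 : ℝ) 2}.indicator g y ∂μ :=
        integral_comp_linearEquiv μ T _
    _ = _ := by rw [integral_indicator_annulus μ hc hg T.symm, smul_comm]

end Polar

theorem stmt_7_general (n : ℕ) (d z : ℂ) (k : ℕ)
    (a : EuclideanSpace ℝ (Fin n) → ℂ)
    (ha_cont : ContinuousOn a {(0 : EuclideanSpace ℝ (Fin n))}ᶜ)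
    (ha_hom : ∀ t : ℝ, 0 < t → ∀ x : EuclideanSpace ℝ (Fin n), x ≠ 0 →
      a (t • x) = (t : ℂ) ^ d * a x)
    (T : EuclideanSpace ℝ (Fin n) ≃ₗ[ℝ] EuclideanSpace ℝ (Fin n)) :
    (∫ ξ : Metric.sphere (0 : EuclideanSpace ℝ (Fin n)) 1,
        a (T (ξ : EuclideanSpace ℝ (Fin n))) *
          ((‖T (ξ : EuclideanSpace ℝ (Fin n))‖ : ℂ) ^ z) *
          ((Real.log ‖T (ξ : EuclideanSpace ℝ (Fin n))‖ : ℂ)) ^ k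
        ∂(volume : Measure (EuclideanSpace ℝ (Fin n))).toSphere) =
      (-1 : ℂ) ^ k *
        ((|LinearMap.det
            (T : EuclideanSpace ℝ (Fin n) →ₗ[ℝ] EuclideanSpace ℝ (Fin n))|⁻¹ : ℝ) : ℂ) *
        ∫ ξ : Metric.sphere (0 : EuclideanSpace ℝ (Fin n)) 1,
          a (ξ : EuclideanSpace ℝ (Fin n)) *
            ((‖T.symm (ξ : EuclideanSpace ℝ (Fin n))‖ : ℂ) ^ (-(n : ℂ) - d - z)) *
            ((Real.log ‖T.symm (ξ : EuclideanSpace ℝ (Fin n))‖ : ℂ)) ^ k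
          ∂(volume : Measure (EuclideanSpace ℝ (Fin n))).toSphere := by
  set u := -(n : ℂ) - d - z
  set g : EuclideanSpace ℝ (Fin n) → ℂ := fun x ↦
    a x * (‖x‖ : ℂ) ^ z * (‖T.symm x‖ : ℂ) ^ u * (Real.log (‖T.symm x‖ / ‖x‖) : ℂ) ^ k
  have hg_cont : ContinuousOn g {0}ᶜ :=
    ((ha_cont.mul (continuousOn_norm_cpow z)).mul
      ((continuousOn_norm_cpow u).comp T.symm.continuous_of_finiteDimensional.continuousOn
        fun _ hx ↦ T.symm.map_ne_zero_iff.2 hx)).mul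
      ((Complex.continuous_ofReal.comp_continuousOn (continuousOn_log_norm_div_norm T.symm)).pow k)
  have hg_hom : PosHomogeneous g (-(Module.finrank ℝ (EuclideanSpace ℝ (Fin n)) : ℂ)) := by
    have := (((show PosHomogeneous a d from ha_hom).mul (posHomogeneous_norm_cpow z)).mul
      ((posHomogeneous_norm_cpow u).comp_linearEquiv T.symm)).mul
      (posHomogeneous_comp_norm_div_norm (fun s ↦ (Real.log s : ℂ) ^ k) T.symm.toLinearMap)
    rw [finrank_euclideanSpace_fin, show -(n : ℂ) = d + z + u + 0 by ring]
    exact this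
  have hneg : ∀ ξ : Metric.sphere (0 : EuclideanSpace ℝ (Fin n)) 1,
      a (T ξ) * (‖T ξ‖ : ℂ) ^ z * (Real.log ‖T ξ‖ : ℂ) ^ k = (-1) ^ k * g (T ξ) := fun ξ ↦ by
    simp only [g, T.symm_apply_apply, norm_eq_of_mem_sphere ξ, one_div, Real.log_inv,
      Complex.ofReal_one, Complex.one_cpow, mul_one, Complex.ofReal_neg]
    rw [mul_left_comm, ← mul_pow, neg_one_mul, neg_neg]
  have hsphere : ∀ ξ : Metric.sphere (0 : EuclideanSpace ℝ (Fin n)) 1,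
      g ξ = a ξ * (‖T.symm ξ‖ : ℂ) ^ u * (Real.log ‖T.symm ξ‖ : ℂ) ^ k := fun ξ ↦ by
    simp [g, norm_eq_of_mem_sphere ξ]
  simp_rw [hneg, ← hsphere, integral_const_mul,
    integral_toSphere_comp_linearEquiv volume hg_cont hg_hom T, Complex.real_smul]
  ring

/-- Change of variables by an invertible linear map in spherical integrals of
log-homogeneous functions: for `a` continuous on `ℝⁿ∖{0}` and homogeneous of degree `d`,
`∫_{S^{n−1}} a(Tξ)‖Tξ‖^z (log‖Tξ‖)^k dσ(ξ)
  = (−1)^k |det T|⁻¹ ∫_{S^{n−1}} a(ξ)‖T⁻¹ξ‖^{−n−d−z} (log‖T⁻¹ξ‖)^k dσ(ξ)`. -/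
theorem stmt_7 (n : ℕ) (hn : 1 ≤ n) (d z : ℂ) (k : ℕ)
    (a : EuclideanSpace ℝ (Fin n) → ℂ)
    (ha_cont : ContinuousOn a {(0 : EuclideanSpace ℝ (Fin n))}ᶜ)
    (ha_hom : ∀ t : ℝ, 0 < t → ∀ x : EuclideanSpace ℝ (Fin n), x ≠ 0 →
      a (t • x) = (t : ℂ) ^ d * a x)
    (T : EuclideanSpace ℝ (Fin n) ≃ₗ[ℝ] EuclideanSpace ℝ (Fin n)) :
    (∫ ξ : Metric.sphere (0 : EuclideanSpace ℝ (Fin n)) 1,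
        a (T (ξ : EuclideanSpace ℝ (Fin n))) *
          ((‖T (ξ : EuclideanSpace ℝ (Fin n))‖ : ℂ) ^ z) *
          ((Real.log ‖T (ξ : EuclideanSpace ℝ (Fin n))‖ : ℂ)) ^ k
        ∂(volume : Measure (EuclideanSpace ℝ (Fin n))).toSphere) =
      (-1 : ℂ) ^ k *
        ((|LinearMap.det
            (T : EuclideanSpace ℝ (Fin n) →ₗ[ℝ] EuclideanSpace ℝ (Fin n))|⁻¹ : ℝ) : ℂ) *
        ∫ ξ : Metric.sphere (0 : EuclideanSpace ℝ (Fin n)) 1,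
          a (ξ : EuclideanSpace ℝ (Fin n)) *
            ((‖T.symm (ξ : EuclideanSpace ℝ (Fin n))‖ : ℂ) ^ (-(n : ℂ) - d - z)) *
            ((Real.log ‖T.symm (ξ : EuclideanSpace ℝ (Fin n))‖ : ℂ)) ^ k
          ∂(volume : Measure (EuclideanSpace ℝ (Fin n))).toSphere :=
  stmt_7_general n d z k a ha_cont ha_hom T
end

section
/- Let α ∈ (−1, 0) and x ∈ ℝ with x ≠ 0. Then the improper integral lim_{R→∞} ∫_{−R}^{R} e^{−2π i x ξ} |ξ|^α dξ exists and equals 2 · sin(−απ/2) · Γ(α+1) / |2πx|^{α+1}. -/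
/-!
By evenness, the integral over `[-R, R]` equals `2 ∫₀ᴿ |ξ|^α cos (2πxξ) dξ`, and the substitution
`u = |2πx| ξ` reduces the claim to the classical improper integral
`∫₀^∞ u^(-a) cos u du = Γ(1 - a) sin (aπ/2)` with `a = -α ∈ (0, 1)`.
For the latter write `Γ(a) u^(-a) = ∫₀^∞ t^(a-1) e^(-tu) dt` and swap the integrals over
`(0, ∞) × (0, R]`. The inner integral `∫₀ᴿ e^(-tu) cos u du` is elementary; its main term gives
`∫₀^∞ t^a / (1 + t²) dt = π / (2 cos (πa/2))` (a Beta integral after `v = t²`, itself computed by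
Fubini from `1/(1 + v) = ∫₀^∞ e^(-(1+v)w) dw`), and since `|sin R - t cos R| ≤ 1 + t²` the rest
is bounded by `∫₀^∞ t^(a-1) e^(-tR) dt = Γ(a) R^(-a)`.
Euler's reflection formula turns `π / (2 Γ(a) cos (πa/2))` into `Γ(1 - a) sin (πa/2)`.
-/

open Filter Topology Set MeasureTheory Real

lemma integrableOn_rpow_mul_exp_neg_mul_Ioi {a r : ℝ} (ha : 0 < a) (hr : 0 < r) :
    IntegrableOn (fun t : ℝ => t ^ (a - 1) * exp (-(r * t))) (Ioi 0) := by
  simpa using integrableOn_rpow_mul_exp_neg_mul_rpow (s := a - 1) (p := 1) (by linarith) one_pos hr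

lemma integral_rpow_mul_exp_neg_mul_mul_Ioi {a u : ℝ} (ha : 0 < a) (hu : 0 < u) (c : ℝ) :
    ∫ t in Ioi 0, t ^ (a - 1) * exp (-(t * u)) * c = Gamma a * u ^ (-a) * c := by
  simp_rw [integral_mul_const, mul_comm _ u, integral_rpow_mul_exp_neg_mul_Ioi ha hu, one_div,
    inv_rpow hu.le, rpow_neg hu.le, mul_comm (Gamma a)]

lemma integral_mul_exp_neg_one_add_mul_Ioi (c : ℝ) {v : ℝ} (hv : -1 < v) :
    ∫ w in Ioi 0, c * exp (-((1 + v) * w)) = c / (1 + v) := by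
  rw [integral_const_mul, div_eq_mul_one_div]
  congr 1
  simpa using integral_rpow_mul_exp_neg_mul_Ioi one_pos (by linarith : 0 < 1 + v)

lemma integral_rpow_mul_exp_neg_one_add_mul_Ioi {b w : ℝ} (hb : 0 < b) (hw : 0 < w) :
    ∫ v in Ioi 0, v ^ (b - 1) * exp (-((1 + v) * w))
      = Gamma b * (w ^ ((1 - b) - 1) * exp (-(1 * w))) := by
  have h (v : ℝ) :
      v ^ (b - 1) * exp (-((1 + v) * w)) = exp (-w) * (v ^ (b - 1) * exp (-(w * v))) := by
    rw [← mul_left_comm, ← exp_add]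
    ring_nf
  simp_rw [h, integral_const_mul, integral_rpow_mul_exp_neg_mul_Ioi hb hw, one_div,
    inv_rpow hw.le, ← rpow_neg hw.le, sub_sub_cancel_left, one_mul]
  ring

lemma integrable_rpow_mul_exp_neg_one_add_mul {b : ℝ} (hb0 : 0 < b) (hb1 : b < 1) :
    Integrable (Function.uncurry fun v w : ℝ => v ^ (b - 1) * exp (-((1 + v) * w)))
      ((volume.restrict (Ioi 0)).prod (volume.restrict (Ioi 0))) := by
  rw [integrable_prod_iff' (by fun_prop)]
  constructor
  · filter_upwards [ae_restrict_mem measurableSet_Ioi] with w (hw : 0 < w)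
    refine Integrable.of_integral_ne_zero ?_
    rw [Function.uncurry_def, integral_rpow_mul_exp_neg_one_add_mul_Ioi hb0 hw]
    positivity
  · refine IntegrableOn.congr_fun ((integrableOn_rpow_mul_exp_neg_mul_Ioi (sub_pos.2 hb1)
      one_pos).const_mul (Gamma b)) (fun w (hw : 0 < w) => ?_) measurableSet_Ioi
    rw [← integral_rpow_mul_exp_neg_one_add_mul_Ioi hb0 hw]
    refine setIntegral_congr_fun measurableSet_Ioi fun v (hv : 0 < v) => ?_
    exact (norm_of_nonneg (by positivity)).symm

lemma integrableOn_rpow_sub_one_div_one_add {b : ℝ} (hb0 : 0 < b) (hb1 : b < 1) :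
    IntegrableOn (fun v : ℝ => v ^ (b - 1) / (1 + v)) (Ioi 0) := by
  refine (integrable_rpow_mul_exp_neg_one_add_mul hb0 hb1).integral_prod_left.congr ?_
  filter_upwards [ae_restrict_mem measurableSet_Ioi] with v (hv : 0 < v)
  exact integral_mul_exp_neg_one_add_mul_Ioi (v ^ (b - 1)) (by linarith)

lemma integral_rpow_sub_one_div_one_add_Ioi {b : ℝ} (hb0 : 0 < b) (hb1 : b < 1) :
    ∫ v in Ioi 0, v ^ (b - 1) / (1 + v) = π / sin (π * b) := by
  have hinner : ∀ v ∈ Ioi (0 : ℝ), ∫ w in Ioi 0, v ^ (b - 1) * exp (-((1 + v) * w))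
      = v ^ (b - 1) / (1 + v) := fun v (hv : 0 < v) =>
    integral_mul_exp_neg_one_add_mul_Ioi _ (by linarith)
  calc ∫ v in Ioi 0, v ^ (b - 1) / (1 + v)
      = ∫ v in Ioi 0, ∫ w in Ioi 0, v ^ (b - 1) * exp (-((1 + v) * w)) :=
        (setIntegral_congr_fun measurableSet_Ioi hinner).symm
    _ = ∫ w in Ioi 0, ∫ v in Ioi 0, v ^ (b - 1) * exp (-((1 + v) * w)) :=
        integral_integral_swap (integrable_rpow_mul_exp_neg_one_add_mul hb0 hb1)
    _ = ∫ w in Ioi 0, Gamma b * (w ^ ((1 - b) - 1) * exp (-(1 * w))) :=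
        setIntegral_congr_fun measurableSet_Ioi fun w hw =>
          integral_rpow_mul_exp_neg_one_add_mul_Ioi hb0 hw
    _ = π / sin (π * b) := by
        rw [integral_const_mul, integral_rpow_mul_exp_neg_mul_Ioi (sub_pos.2 hb1) one_pos,
          div_one, one_rpow, one_mul, Gamma_mul_Gamma_one_sub]

lemma rpow_two_sub_one_smul_comp_sq_eq {a t : ℝ} (ht : 0 < t) :
    t ^ ((2 : ℝ) - 1) • ((t ^ (2 : ℝ)) ^ ((a + 1) / 2 - 1) / (1 + t ^ (2 : ℝ)))
      = t ^ a / (1 + t ^ 2) := by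
  rw [← rpow_mul ht.le, smul_eq_mul, mul_div_assoc', ← rpow_add ht, rpow_two]
  ring_nf

lemma integrableOn_rpow_div_one_add_sq {a : ℝ} (ha0 : -1 < a) (ha1 : a < 1) :
    IntegrableOn (fun t : ℝ => t ^ a / (1 + t ^ 2)) (Ioi 0) :=
  ((integrableOn_Ioi_comp_rpow_iff' _ two_ne_zero).2
    (integrableOn_rpow_sub_one_div_one_add (b := (a + 1) / 2) (by linarith) (by linarith)))
    |>.congr_fun (fun _ ht => rpow_two_sub_one_smul_comp_sq_eq ht) measurableSet_Ioi

lemma integral_rpow_div_one_add_sq_Ioi {a : ℝ} (ha0 : -1 < a) (ha1 : a < 1) :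
    ∫ t in Ioi 0, t ^ a / (1 + t ^ 2) = π / (2 * cos (π * a / 2)) := by
  have h := integral_comp_rpow_Ioi_of_pos (g := fun v : ℝ => v ^ ((a + 1) / 2 - 1) / (1 + v))
    two_pos
  rw [integral_rpow_sub_one_div_one_add_Ioi (by linarith) (by linarith),
    setIntegral_congr_fun measurableSet_Ioi fun t ht => by
      rw [mul_smul, rpow_two_sub_one_smul_comp_sq_eq ht, smul_eq_mul],
    integral_const_mul, show π * ((a + 1) / 2) = π * a / 2 + π / 2 by ring, sin_add_pi_div_two] at h
  rw [div_mul_eq_div_div_swap, ← h]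
  ring

lemma abs_sin_sub_mul_cos_le (t R : ℝ) : |sin R - t * cos R| ≤ 1 + t ^ 2 := by
  have h : (sin R - t * cos R) ^ 2 + (t * sin R + cos R) ^ 2 = 1 + t ^ 2 := by
    linear_combination (1 + t ^ 2) * sin_sq_add_cos_sq R
  rw [abs_le]
  constructor <;> nlinarith [sq_nonneg (t * sin R + cos R), sq_nonneg t]

lemma integral_exp_neg_mul_mul_cos (t R : ℝ) :
    ∫ u in (0 : ℝ)..R, exp (-(t * u)) * cos u
      = (t + exp (-(t * R)) * (sin R - t * cos R)) / (1 + t ^ 2) := by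
  have hderiv : ∀ u : ℝ, HasDerivAt
      (fun u => exp (-(t * u)) * (sin u - t * cos u) / (1 + t ^ 2)) (exp (-(t * u)) * cos u) u := by
    intro u
    have h := (((hasDerivAt_id u).const_mul t).neg.exp.mul
      ((hasDerivAt_sin u).sub ((hasDerivAt_cos u).const_mul t))).div_const (1 + t ^ 2)
    refine h.congr_deriv ?_
    simp only [Pi.neg_apply, Pi.sub_apply, id]
    field_simp
    ring
  rw [intervalIntegral.integral_eq_sub_of_hasDerivAt (fun u _ => hderiv u)
    ((by fun_prop : Continuous fun u => exp (-(t * u)) * cos u).intervalIntegrable 0 R)]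
  simp only [mul_zero, neg_zero, exp_zero, sin_zero, cos_zero]
  ring

lemma Gamma_mul_integral_rpow_neg_mul_cos {a R : ℝ} (ha0 : 0 < a) (ha1 : a < 1) (hR : 0 ≤ R) :
    Gamma a * ∫ u in (0 : ℝ)..R, u ^ (-a) * cos u
      = ∫ t in Ioi 0, t ^ (a - 1) * ∫ u in (0 : ℝ)..R, exp (-(t * u)) * cos u := by
  set F : ℝ → ℝ → ℝ := fun t u => t ^ (a - 1) * exp (-(t * u)) * cos u
  have hint : Integrable (Function.uncurry F)
      ((volume.restrict (Ioi 0)).prod (volume.restrict (Ioc 0 R))) := by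
    rw [integrable_prod_iff' (by fun_prop)]
    constructor
    · filter_upwards [ae_restrict_mem measurableSet_Ioc] with u hu
      refine IntegrableOn.congr_fun ((integrableOn_rpow_mul_exp_neg_mul_Ioi ha0 hu.1).mul_const
        (cos u)) (fun t _ => ?_) measurableSet_Ioi
      simp only [F, Function.uncurry_apply_pair, mul_comm u t]
    · have hbound : IntervalIntegrable (fun u => Gamma a * u ^ (-a) * |cos u|) volume 0 R :=
        ((intervalIntegral.intervalIntegrable_rpow' (by linarith)).const_mul _).mul_continuousOn
          (by fun_prop)
      rw [intervalIntegrable_iff_integrableOn_Ioc_of_le hR] at hbound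
      refine hbound.congr_fun (fun u hu => ?_) measurableSet_Ioc
      dsimp only
      rw [← integral_rpow_mul_exp_neg_mul_mul_Ioi ha0 hu.1 |cos u|]
      refine setIntegral_congr_fun measurableSet_Ioi fun t (ht : 0 < t) => ?_
      simp only [F, Function.uncurry_apply_pair, norm_mul, norm_eq_abs,
        abs_of_nonneg (rpow_nonneg ht.le _), abs_of_pos (exp_pos _)]
  calc Gamma a * ∫ u in (0 : ℝ)..R, u ^ (-a) * cos u
      = ∫ u in Ioc 0 R, ∫ t in Ioi 0, F t u := by
        rw [intervalIntegral.integral_of_le hR, ← integral_const_mul]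
        refine setIntegral_congr_fun measurableSet_Ioc fun u hu => ?_
        rw [integral_rpow_mul_exp_neg_mul_mul_Ioi ha0 hu.1, mul_assoc]
    _ = ∫ t in Ioi 0, ∫ u in Ioc 0 R, F t u := (integral_integral_swap hint).symm
    _ = ∫ t in Ioi 0, t ^ (a - 1) * ∫ u in (0 : ℝ)..R, exp (-(t * u)) * cos u := by
        simp_rw [intervalIntegral.integral_of_le hR, ← integral_const_mul, F, mul_assoc]

lemma abs_Gamma_mul_integral_rpow_neg_mul_cos_sub_le {a R : ℝ} (ha0 : 0 < a) (ha1 : a < 1)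
    (hR : 0 < R) :
    |Gamma a * (∫ u in (0 : ℝ)..R, u ^ (-a) * cos u) - π / (2 * cos (π * a / 2))|
      ≤ Gamma a * R ^ (-a) := by
  set E : ℝ → ℝ := fun t => t ^ (a - 1) * exp (-(t * R)) * ((sin R - t * cos R) / (1 + t ^ 2))
  have hbound : ∀ t ∈ Ioi (0 : ℝ), ‖E t‖ ≤ t ^ (a - 1) * exp (-(t * R)) * 1 :=
    fun t (ht : 0 < t) => by
      rw [norm_mul, norm_of_nonneg (by positivity), norm_eq_abs, abs_div,
        abs_of_pos (by positivity : (0 : ℝ) < 1 + t ^ 2)]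
      exact mul_le_mul_of_nonneg_left
        (div_le_one_of_le₀ (abs_sin_sub_mul_cos_le t R) (by positivity)) (by positivity)
  have hdom : IntegrableOn (fun t : ℝ => t ^ (a - 1) * exp (-(t * R)) * 1) (Ioi 0) := by
    simpa only [mul_one, mul_comm _ R] using integrableOn_rpow_mul_exp_neg_mul_Ioi ha0 hR
  have hE : IntegrableOn E (Ioi 0) :=
    hdom.mono' (by fun_prop) ((ae_restrict_iff' measurableSet_Ioi).2 (.of_forall hbound))
  have hsplit : Gamma a * ∫ u in (0 : ℝ)..R, u ^ (-a) * cos u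
      = (∫ t in Ioi 0, t ^ a / (1 + t ^ 2)) + ∫ t in Ioi 0, E t := by
    rw [Gamma_mul_integral_rpow_neg_mul_cos ha0 ha1 hR.le,
      ← integral_add (integrableOn_rpow_div_one_add_sq (by linarith) ha1) hE]
    refine setIntegral_congr_fun measurableSet_Ioi fun t (ht : 0 < t) => ?_
    simp only [E, integral_exp_neg_mul_mul_cos, rpow_sub_one ht.ne']
    field_simp
  rw [hsplit, integral_rpow_div_one_add_sq_Ioi (by linarith) ha1, add_sub_cancel_left,
    ← mul_one (Gamma a * R ^ (-a)), ← integral_rpow_mul_exp_neg_mul_mul_Ioi ha0 hR, ← norm_eq_abs]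
  exact norm_integral_le_of_norm_le hdom
    ((ae_restrict_iff' measurableSet_Ioi).2 (.of_forall hbound))

lemma tendsto_integral_rpow_neg_mul_cos {a : ℝ} (ha0 : 0 < a) (ha1 : a < 1) :
    Tendsto (fun R => ∫ u in (0 : ℝ)..R, u ^ (-a) * cos u) atTop
      (𝓝 (Gamma (1 - a) * sin (a * π / 2))) := by
  have hΓ : 0 < Gamma a := Gamma_pos_of_pos ha0
  have hlim : Tendsto (fun R => Gamma a * ∫ u in (0 : ℝ)..R, u ^ (-a) * cos u) atTop
      (𝓝 (π / (2 * cos (π * a / 2)))) := by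
    rw [tendsto_iff_norm_sub_tendsto_zero]
    refine squeeze_zero' (.of_forall fun _ => norm_nonneg _) ?_
      (by simpa using (tendsto_rpow_neg_atTop ha0).const_mul (Gamma a))
    filter_upwards [eventually_gt_atTop 0] with R hR
    exact abs_Gamma_mul_integral_rpow_neg_mul_cos_sub_le ha0 ha1 hR
  have hvalue : π / (2 * cos (π * a / 2)) = Gamma a * (Gamma (1 - a) * sin (a * π / 2)) := by
    have hcos : 0 < cos (π * a / 2) :=
      cos_pos_of_mem_Ioo ⟨by nlinarith [pi_pos], by nlinarith [pi_pos]⟩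
    have hsin : 0 < sin (π * a / 2) :=
      sin_pos_of_pos_of_lt_pi (by positivity) (by nlinarith [pi_pos])
    rw [← mul_assoc, Gamma_mul_Gamma_one_sub, show π * a = 2 * (π * a / 2) by ring, sin_two_mul,
      mul_comm a π]
    field_simp
  simpa [hvalue, hΓ.ne'] using hlim.const_mul (Gamma a)⁻¹

lemma intervalIntegrable_abs_rpow {r : ℝ} (hr : -1 < r) (a b : ℝ) :
    IntervalIntegrable (fun x : ℝ => |x| ^ r) volume a b := by
  have hpos (c : ℝ) (hc : 0 ≤ c) : IntervalIntegrable (fun x : ℝ => |x| ^ r) volume 0 c :=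
    (intervalIntegral.intervalIntegrable_rpow' hr).congr fun x hx => by
      rw [uIoc_of_le hc] at hx
      simp only [abs_of_pos hx.1]
  have hzero (c : ℝ) : IntervalIntegrable (fun x : ℝ => |x| ^ r) volume 0 c := by
    rcases le_total 0 c with hc | hc
    · exact hpos c hc
    · rw [IntervalIntegrable.iff_comp_neg]
      simpa only [neg_zero, abs_neg] using hpos (-c) (by linarith)
  exact (hzero a).symm.trans (hzero b)

lemma intervalIntegral.integral_neg_self_eq_integral_add_comp_neg {E : Type*}
    [NormedAddCommGroup E] [NormedSpace ℝ E] {f : ℝ → E} {R : ℝ}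
    (hf : IntervalIntegrable f volume (-R) R) :
    ∫ x in -R..R, f x = ∫ x in 0..R, (f x + f (-x)) := by
  have hzero : (0 : ℝ) ∈ uIcc (-R) R := by
    rcases le_total 0 R with h | h <;> simp [h]
  have hneg : IntervalIntegrable f volume (-R) 0 :=
    hf.mono_set (uIcc_subset_uIcc_left hzero)
  have hpos : IntervalIntegrable f volume 0 R := hf.mono_set (uIcc_subset_uIcc_right hzero)
  have hneg' : IntervalIntegrable (fun x => f (-x)) volume 0 R := by
    simpa using ((IntervalIntegrable.iff_comp_neg).1 hneg).symm
  rw [← integral_add_adjacent_intervals hneg hpos, integral_add hpos hneg', add_comm,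
    integral_comp_neg, neg_zero]

lemma integral_cexp_mul_abs_rpow {γ : ℝ} (hγ : -1 < γ) (x R : ℝ) :
    ∫ ξ in -R..R, Complex.exp (-2 * π * Complex.I * x * ξ) * ((|ξ| ^ γ : ℝ) : ℂ)
      = ((2 * ∫ ξ in (0 : ℝ)..R, |ξ| ^ γ * cos (2 * π * x * ξ) : ℝ) : ℂ) := by
  have hf : IntervalIntegrable
      (fun ξ : ℝ => Complex.exp (-2 * π * Complex.I * x * ξ) * ((|ξ| ^ γ : ℝ) : ℂ)) volume (-R) R :=
    have h := intervalIntegrable_abs_rpow hγ (-R) R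
    IntervalIntegrable.continuousOn_mul ⟨h.1.ofReal, h.2.ofReal⟩ (by fun_prop)
  rw [intervalIntegral.integral_neg_self_eq_integral_add_comp_neg hf,
    ← intervalIntegral.integral_const_mul, ← intervalIntegral.integral_ofReal]
  refine intervalIntegral.integral_congr fun ξ _ => ?_
  have e₁ : -2 * π * Complex.I * x * ξ = -((2 * π * x * ξ : ℝ) : ℂ) * Complex.I := by
    push_cast; ring
  have e₂ : -2 * π * Complex.I * x * ((-ξ : ℝ) : ℂ) = ((2 * π * x * ξ : ℝ) : ℂ) * Complex.I := by
    push_cast; ring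
  rw [e₁, e₂, abs_neg, ← add_mul, add_comm, ← Complex.two_cos, ← Complex.ofReal_cos]
  push_cast
  ring

lemma integral_abs_rpow_mul_cos_mul {γ c : ℝ} (hc : c ≠ 0) (R : ℝ) :
    ∫ ξ in (0 : ℝ)..R, |ξ| ^ γ * cos (c * ξ)
      = |c| ^ (-(γ + 1)) * ∫ u in (0 : ℝ)..|c| * R, |u| ^ γ * cos u := by
  have hc' : 0 < |c| := abs_pos.2 hc
  have hscale (ξ : ℝ) :
      |ξ| ^ γ * cos (c * ξ) = |c| ^ (-γ) * (|(|c| * ξ)| ^ γ * cos (|c| * ξ)) := by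
    have hcos : cos (|c| * ξ) = cos (c * ξ) := by
      rcases abs_choice c with h | h <;> simp [h]
    rw [hcos, abs_mul, abs_abs, mul_rpow hc'.le (abs_nonneg ξ), ← mul_assoc, ← mul_assoc,
      ← rpow_add hc', neg_add_cancel, rpow_zero, one_mul]
  simp_rw [hscale, intervalIntegral.integral_const_mul,
    intervalIntegral.integral_comp_mul_left (fun u => |u| ^ γ * cos u) hc'.ne', mul_zero,
    smul_eq_mul, ← mul_assoc, ← rpow_neg_one, ← rpow_add hc', neg_add]

/-- The Fourier transform of `ξ ↦ |ξ|^α` for `α ∈ (−1,0)`: for `x ≠ 0` the improper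
integral `lim_{R→∞} ∫_{−R}^{R} e^{−2πixξ} |ξ|^α dξ` exists and equals
`2 sin(−απ/2) Γ(α+1) / |2πx|^{α+1}`. -/
theorem stmt_14 (α : ℝ) (hα₁ : -1 < α) (hα₂ : α < 0) (x : ℝ) (hx : x ≠ 0) :
    Tendsto (fun R : ℝ =>
        ∫ ξ in (-R)..R,
          Complex.exp (-2 * Real.pi * Complex.I * x * ξ) * ((|ξ| ^ α : ℝ) : ℂ)) atTop
      (𝓝 (((2 * Real.sin (-α * Real.pi / 2) * Real.Gamma (α + 1) /
          |2 * Real.pi * x| ^ (α + 1) : ℝ) : ℂ))) := by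
  have hc : 2 * π * x ≠ 0 := mul_ne_zero (mul_ne_zero two_ne_zero pi_ne_zero) hx
  have hcos : Tendsto (fun R => ∫ u in (0 : ℝ)..|2 * π * x| * R, |u| ^ α * cos u) atTop
      (𝓝 (Gamma (α + 1) * sin (-α * π / 2))) := by
    have h := tendsto_integral_rpow_neg_mul_cos (a := -α) (by linarith) (by linarith)
    rw [neg_neg, sub_neg_eq_add, add_comm] at h
    refine (h.comp (tendsto_id.const_mul_atTop (abs_pos.2 hc))).congr' ?_
    filter_upwards [eventually_ge_atTop 0] with R hR
    refine intervalIntegral.integral_congr fun u hu => ?_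
    rw [uIcc_of_le (by positivity)] at hu
    simp only [abs_of_nonneg hu.1]
  simp_rw [integral_cexp_mul_abs_rpow hα₁, integral_abs_rpow_mul_cos_mul hc, tendsto_ofReal_iff]
  convert (hcos.const_mul (|2 * π * x| ^ (-(α + 1)))).const_mul 2 using 2
  rw [rpow_neg (abs_nonneg _)]
  ring
end
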